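/- arXiv:1904.04080 — 2 statements merged into one kernel-verified Lean document; each statement's English description precedes it below -/
import Mathlib

section
/- Let $\mathcal{G}$ forbid a monochromatic chain of every color and let $\overline{\beta}$ be positive weights. Then the maximum of $\omega(\overline{\beta}, T)$ over all valid templates $T$ on $\mathcal{P}([n])$ is attained by a valid template $T$ such that $T(x)$ depends only on $|x|$ and $\mathrm{Supp}(T)$ is a union of at most $L(\mathcal{G})$ consecutive layers of $\mathcal{P}([n])$; moreover this maximum satisfies $\max_T \omega(\overline{\beta}, T) \leq \omega_{crit}(\overline{\beta}) \binom{n}{\lfloor n/2 \rfloor}$ and $\max_T \omega(\overline{\beta}, T) \geq \omega_{crit}(\overline{\beta}) (1 - O(1/n)) \binom{n}{\lfloor n/2 \rfloor}$. -/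
open Finset

/-- `𝒢` forbids a monochromatic chain of every color. -/
def Sparse (m : ℕ) (G : Set (List (Fin m))) : Prop :=
  ∀ i : Fin m, ∃ k, 1 ≤ k ∧ List.replicate k i ∈ G

/-- A valid template supported on a chain poset (modeled as `ℕ`). -/
def ValidChainTemplate {m : ℕ} (G : Set (List (Fin m))) (t : ℕ → Finset (Fin m)) : Prop :=
  {j | t j ≠ ∅}.Finite ∧
    ∀ c : ℕ → Fin m, (∀ j, t j ≠ ∅ → c j ∈ t j) →
      ¬ ∃ l : List ℕ, l.Chain' (· < ·) ∧ (∀ j ∈ l, t j ≠ ∅) ∧ l.map c ∈ G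

noncomputable def omegaChain {m : ℕ} (β : Fin m → ℝ) (t : ℕ → Finset (Fin m)) : ℝ :=
  ∑ᶠ j : ℕ, Real.log (1 + ∑ i ∈ t j, β i)

noncomputable def omegaCrit {m : ℕ} (β : Fin m → ℝ) (G : Set (List (Fin m))) : ℝ :=
  sSup {w | ∃ t, ValidChainTemplate G t ∧ w = omegaChain β t}

/-- A valid template on `𝒫([n])`. -/
def ValidTemplate {n m : ℕ} (G : Set (List (Fin m)))
    (T : Finset (Fin n) → Finset (Fin m)) : Prop :=
  ∀ c : Finset (Fin n) → Fin m, (∀ x, T x ≠ ∅ → c x ∈ T x) →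
    ¬ ∃ l : List (Finset (Fin n)), l.Chain' (· ⊂ ·) ∧ (∀ x ∈ l, T x ≠ ∅) ∧ l.map c ∈ G



/-!
Averaging `∑ⱼ C(n, j) log (1 + |T(Cⱼ)|_β)` over the maximal chains `Cⱼ = σ • {0, …, j - 1}`,
`σ` a permutation, gives exactly `ω(β, T)`; so the restriction of `T` to some maximal chain is a
valid chain template `t` with `ω(β, T) ≤ ∑ⱼ C(n, j) log (1 + |t j|_β)`. Moving the nonempty values
of `t` to consecutive positions, in their order, keeps it valid, and if the window is chosen so
that every value moves towards `n / 2`, unimodality of `C(n, ·)` makes the weight grow. The layered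
template `x ↦ t' |x|` obtained this way is valid, hence optimal. Its weight is at most
`C(n, n / 2) ω(β, t') ≤ C(n, n / 2) ω_crit`; conversely, any valid chain template packed into the
`< L` layers just below `n / 2` gains the factor `C(n, n / 2 - s) ≥ (1 - 4 L² / n) C(n, n / 2)`.
-/

section Admissible

variable {m : ℕ} {α β : Type*} {G : Set (List (Fin m))} {T : α → Finset (Fin m)}

lemma nonempty_of_forall₂_mem {l : List α} {w : List (Fin m)}
    (h : l.Forall₂ (fun x i => i ∈ T x) w) : ∀ x ∈ l, (T x).Nonempty :=
  ((List.forall₂_and_left l w).1 (h.imp fun _ i hi => ⟨⟨i, hi⟩, hi⟩)).1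

lemma exists_choice_map_eq (i₀ : Fin m) :
    ∀ {l : List α} {w : List (Fin m)}, l.Nodup → l.Forall₂ (fun x i => i ∈ T x) w →
      ∃ c : α → Fin m, (∀ x, T x ≠ ∅ → c x ∈ T x) ∧ l.map c = w
  | [], _, _, .nil => by
    classical
    refine ⟨fun x => if h : (T x).Nonempty then h.choose else i₀, fun x hx => ?_, rfl⟩
    have hx' := nonempty_iff_ne_empty.2 hx
    simpa only [dif_pos hx'] using hx'.choose_spec
  | x :: l, i :: w, hnd, .cons hi h => by
    classical
    obtain ⟨hx, hnd⟩ := List.nodup_cons.1 hnd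
    obtain ⟨c, hc, rfl⟩ := exists_choice_map_eq i₀ hnd h
    refine ⟨Function.update c x i, fun y hy => ?_, ?_⟩
    · rcases eq_or_ne y x with rfl | hyx
      · simpa using hi
      · simpa [hyx] using hc y hy
    · simp only [List.map_cons, Function.update_self, List.cons.injEq, true_and]
      exact List.map_congr_left fun y hy => Function.update_of_ne (ne_of_mem_of_not_mem hy hx) _ _

variable [Preorder α] [Preorder β]

variable (G) in
def IsAdmissible (T : α → Finset (Fin m)) : Prop :=
  ∀ l : List α, l.Pairwise (· < ·) → ∀ w ∈ G, ¬ l.Forall₂ (fun x i => i ∈ T x) w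

lemma forall_choice_iff_isAdmissible (hG : [] ∉ G) :
    (∀ c : α → Fin m, (∀ x, T x ≠ ∅ → c x ∈ T x) →
      ¬ ∃ l : List α, l.IsChain (· < ·) ∧ (∀ x ∈ l, T x ≠ ∅) ∧ l.map c ∈ G) ↔
      IsAdmissible G T := by
  constructor
  · rintro h l hl (_ | ⟨i₀, w⟩) hw hlw
    · exact hG hw
    obtain ⟨c, hc, hcl⟩ := exists_choice_map_eq i₀ (hl.imp ne_of_lt) hlw
    exact h c hc ⟨l, List.isChain_iff_pairwise.2 hl,
      fun x hx => nonempty_iff_ne_empty.1 (nonempty_of_forall₂_mem hlw x hx), hcl ▸ hw⟩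
  · rintro h c hc ⟨l, hl, hsupp, hlG⟩
    exact h l (List.isChain_iff_pairwise.1 hl) _ hlG
      (List.forall₂_map_right_iff.2 (List.forall₂_same.2 fun x hx => hc x (hsupp x hx)))

lemma IsAdmissible.comap {T' : β → Finset (Fin m)} (hT : IsAdmissible G T) (g : β → α)
    (hle : ∀ y, T' y ⊆ T (g y))
    (hmono : ∀ y y', (T' y).Nonempty → (T' y').Nonempty → y < y' → g y < g y') :
    IsAdmissible G T' := by
  intro l hl w hw hlw
  have hne := nonempty_of_forall₂_mem hlw
  refine hT (l.map g) ?_ w hw (List.forall₂_map_left_iff.2 (hlw.imp fun y _ hi => hle y hi))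
  exact List.pairwise_map.2 (hl.imp_of_mem fun hy hy' => hmono _ _ (hne _ hy) (hne _ hy'))

lemma IsAdmissible.comp_strictMono (hT : IsAdmissible G T) {g : β → α} (hg : StrictMono g) :
    IsAdmissible G (T ∘ g) :=
  hT.comap g (fun _ => subset_rfl) fun _ _ _ _ h => hg h

end Admissible

section Validity

variable {m n : ℕ} {G : Set (List (Fin m))}

lemma validTemplate_iff_isAdmissible (hG : [] ∉ G) {T : Finset (Fin n) → Finset (Fin m)} :
    ValidTemplate G T ↔ IsAdmissible G T :=
  forall_choice_iff_isAdmissible hG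

lemma validChainTemplate_iff (hG : [] ∉ G) {t : ℕ → Finset (Fin m)} :
    ValidChainTemplate G t ↔ {j | t j ≠ ∅}.Finite ∧ IsAdmissible G t :=
  and_congr_right' (forall_choice_iff_isAdmissible hG)

lemma ValidChainTemplate.validTemplate_comp_card (hG : [] ∉ G) {t : ℕ → Finset (Fin m)}
    (ht : ValidChainTemplate G t) : ValidTemplate G (fun x : Finset (Fin n) => t #x) :=
  (validTemplate_iff_isAdmissible hG).2
    (((validChainTemplate_iff hG).1 ht).2.comp_strictMono card_strictMono)

lemma validChainTemplate_empty (hG : [] ∉ G) : ValidChainTemplate G fun _ => ∅ :=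
  (validChainTemplate_iff hG).2 ⟨by simp, fun l _ w _ hlw => by
    cases l with
    | nil => cases hlw; contradiction
    | cons x l => simpa using nonempty_of_forall₂_mem hlw x (by simp)⟩

end Validity

section Weights

variable {m : ℕ} (β : Fin m → ℝ)

noncomputable def logWeight (u : Finset (Fin m)) : ℝ :=
  Real.log (1 + ∑ i ∈ u, β i)

noncomputable def layerWeight (n : ℕ) (t : ℕ → Finset (Fin m)) : ℝ :=
  ∑ j ∈ range (n + 1), (n.choose j : ℝ) * logWeight β (t j)

lemma logWeight_def (u : Finset (Fin m)) : logWeight β u = Real.log (1 + ∑ i ∈ u, β i) := rfl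

@[simp] lemma logWeight_empty : logWeight β ∅ = 0 := by simp [logWeight]

lemma omegaChain_const_empty : omegaChain β (fun _ => ∅) = 0 := by simp [omegaChain]

variable {β}

lemma logWeight_nonneg (hβ : ∀ i, 0 ≤ β i) (u : Finset (Fin m)) : 0 ≤ logWeight β u :=
  Real.log_nonneg (by linarith [sum_nonneg fun i (_ : i ∈ u) => hβ i])

lemma logWeight_le_univ (hβ : ∀ i, 0 ≤ β i) (u : Finset (Fin m)) :
    logWeight β u ≤ logWeight β univ := by
  have := sum_le_sum_of_subset_of_nonneg (subset_univ u) fun i _ _ => hβ i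
  exact Real.log_le_log (by linarith [sum_nonneg fun i (_ : i ∈ u) => hβ i]) (by linarith)

lemma sum_apply_card_eq {n : ℕ} (g : ℕ → ℝ) :
    ∑ x : Finset (Fin n), g #x = ∑ j ∈ range (n + 1), (n.choose j : ℝ) * g j := by
  simpa [nsmul_eq_mul] using sum_powerset_apply_card g (x := (univ : Finset (Fin n)))

lemma sum_logWeight_card (n : ℕ) (t : ℕ → Finset (Fin m)) :
    ∑ x : Finset (Fin n), logWeight β (t #x) = layerWeight β n t :=
  sum_apply_card_eq fun j => logWeight β (t j)

lemma omegaChain_eq_sum {t : ℕ → Finset (Fin m)} {s : Finset ℕ} (hs : ∀ j, t j ≠ ∅ → j ∈ s) :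
    omegaChain β t = ∑ j ∈ s, logWeight β (t j) := by
  refine finsum_eq_sum_of_support_subset _ fun j hj => hs j fun htj => hj ?_
  simp [htj]

lemma omegaChain_le_ncard_mul (hβ : ∀ i, 0 ≤ β i) {t : ℕ → Finset (Fin m)}
    (hf : {j | t j ≠ ∅}.Finite) :
    omegaChain β t ≤ {j | t j ≠ ∅}.ncard * logWeight β univ := by
  rw [omegaChain_eq_sum (s := hf.toFinset) fun j hj => hf.mem_toFinset.2 hj,
    Set.ncard_eq_toFinset_card _ hf, ← nsmul_eq_mul]
  exact sum_le_card_nsmul _ _ _ fun j _ => logWeight_le_univ hβ _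

lemma layerWeight_le_choose_mul_omegaChain (hβ : ∀ i, 0 ≤ β i) {t : ℕ → Finset (Fin m)}
    (hf : {j | t j ≠ ∅}.Finite) (n : ℕ) :
    layerWeight β n t ≤ n.choose (n / 2) * omegaChain β t := by
  classical
  rw [omegaChain_eq_sum (s := range (n + 1) ∪ hf.toFinset)
    fun j hj => mem_union_right _ (hf.mem_toFinset.2 hj), mul_sum]
  calc layerWeight β n t
      ≤ ∑ j ∈ range (n + 1), (n.choose (n / 2) : ℝ) * logWeight β (t j) :=
        sum_le_sum fun j _ => mul_le_mul_of_nonneg_right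
          (by exact_mod_cast Nat.choose_le_middle j n) (logWeight_nonneg hβ _)
    _ ≤ _ := sum_le_sum_of_subset_of_nonneg subset_union_left fun j _ _ =>
        mul_nonneg (Nat.cast_nonneg _) (logWeight_nonneg hβ _)

end Weights

section Averaging

open scoped Pointwise
open Equiv

variable {n : ℕ}

lemma sum_perm_smul_eq_of_card_eq (f : Finset (Fin n) → ℝ) {x y : Finset (Fin n)}
    (h : #x = #y) : ∑ σ : Perm (Fin n), f (σ • x) = ∑ σ : Perm (Fin n), f (σ • y) := by
  obtain ⟨τ, hτ⟩ := (Set.powersetCard.isPretransitive (α := Fin n) (n := #y)).exists_smul_eq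
    ⟨x, h⟩ ⟨y, rfl⟩
  rw [← show τ • x = y from congrArg Subtype.val hτ,
    ← Equiv.sum_comp (Equiv.mulRight τ) fun σ => f (σ • x)]
  simp [mul_smul]

/-- Averaging over the maximal chains `σ • {0} ⊂ σ • {0, 1} ⊂ ⋯`, `σ` a permutation. -/
lemma exists_chain_sum_le (f : Finset (Fin n) → ℝ) :
    ∃ Y : ℕ → Finset (Fin n), (∀ j j', j < j' → j' ≤ n → Y j ⊂ Y j') ∧
      ∑ x, f x ≤ ∑ j ∈ range (n + 1), (n.choose j : ℝ) * f (Y j) := by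
  classical
  let X : ℕ → Finset (Fin n) := fun j => {i | (i : ℕ) < j}
  have hXcard : ∀ x : Finset (Fin n), #(X #x) = #x := fun x => by
    simpa [X, Fin.card_filter_val_lt] using card_le_univ x
  have hX : ∀ j j', j < j' → j' ≤ n → X j ⊂ X j' := fun j j' hjj' hj' =>
    ssubset_iff_of_subset (fun i hi => by simp_all [X]; omega) |>.2
      ⟨⟨j, by omega⟩, by simp [X, hjj']⟩
  have key : ∑ _σ : Perm (Fin n), ∑ x, f x
      = ∑ σ : Perm (Fin n), ∑ j ∈ range (n + 1), (n.choose j : ℝ) * f (σ • X j) :=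
    calc ∑ _σ : Perm (Fin n), ∑ x, f x
        = ∑ σ : Perm (Fin n), ∑ x, f (σ • x) :=
          sum_congr rfl fun σ _ => (Equiv.sum_comp (MulAction.toPerm σ) f).symm
      _ = ∑ x : Finset (Fin n), ∑ σ : Perm (Fin n), f (σ • X #x) := by
          rw [sum_comm]
          exact sum_congr rfl fun x _ => sum_perm_smul_eq_of_card_eq f (hXcard x).symm
      _ = _ := by
          rw [sum_apply_card_eq (fun j => ∑ σ : Perm (Fin n), f (σ • X j)), sum_comm]
          simp only [mul_sum]
  obtain ⟨σ, -, hσ⟩ := exists_le_of_sum_le univ_nonempty key.le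
  exact ⟨fun j => σ • X j, fun j j' hjj' hj' =>
    ⟨smul_finset_subset_smul_finset_iff.2 (hX j j' hjj' hj').1,
      fun h => (hX j j' hjj' hj').2 (smul_finset_subset_smul_finset_iff.1 h)⟩, hσ⟩

end Averaging

section Binomial

variable {n : ℕ}

lemma choose_le_choose_of_le_of_le_half {r s : ℕ} (hrs : r ≤ s) (hs : s ≤ n / 2) :
    n.choose r ≤ n.choose s := by
  induction s, hrs using Nat.le_induction with
  | base => rfl
  | succ s _ ih => exact (ih (by omega)).trans (Nat.choose_le_succ_of_lt_half_left (by omega))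

lemma choose_le_choose_of_half_lt_of_le {r s : ℕ} (hs : n / 2 < s) (hsr : s ≤ r) :
    n.choose r ≤ n.choose s := by
  rcases le_or_gt r n with hr | hr
  · rw [← Nat.choose_symm hr, ← Nat.choose_symm (hsr.trans hr)]
    exact choose_le_choose_of_le_of_le_half (by omega) (by omega)
  · simp [Nat.choose_eq_zero_of_lt hr]

lemma choose_succ_le_choose_add {j d : ℕ} (hj : j + 1 ≤ n / 2) (hd : n ≤ 2 * j + 1 + d) :
    (n : ℝ) * n.choose (j + 1) ≤ n * n.choose j + 2 * d * n.choose (n / 2) := by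
  have hjn : j ≤ n := by omega
  have hid : (n.choose (j + 1) : ℝ) * (j + 1) = n.choose j * (n - j) := by
    have := congrArg (Nat.cast : ℕ → ℝ) (Nat.choose_succ_right_eq n j)
    push_cast [Nat.cast_sub hjn] at this
    exact this
  have hC : (n.choose (j + 1) : ℝ) ≤ n.choose (n / 2) := by
    exact_mod_cast Nat.choose_le_middle (j + 1) n
  have hgap : (n : ℝ) - 2 * j - 1 ≤ d := by
    have : (n : ℝ) ≤ 2 * j + 1 + d := by exact_mod_cast hd
    linarith
  have hgap0 : (0 : ℝ) ≤ n - 2 * j - 1 := by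
    have : (2 * j + 2 : ℝ) ≤ n := by exact_mod_cast (by omega : 2 * j + 2 ≤ n)
    linarith
  have hhalf : (n : ℝ) ≤ 2 * (n - j) := by
    have : (2 * j : ℝ) ≤ n := by exact_mod_cast (by omega : 2 * j ≤ n)
    linarith
  have hpos : (0 : ℝ) < n - j := by
    have : (j + 1 : ℝ) ≤ n := by exact_mod_cast (by omega : j + 1 ≤ n)
    linarith
  have key : (n - j : ℝ) * (n * n.choose (j + 1) - n * n.choose j)
      ≤ (n - j) * (2 * d * n.choose (n / 2)) :=
    calc (n - j : ℝ) * (n * n.choose (j + 1) - n * n.choose j)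
        = n * n.choose (j + 1) * (n - 2 * j - 1) := by linear_combination (n : ℝ) * hid
      _ ≤ n * n.choose (n / 2) * d :=
          mul_le_mul (mul_le_mul_of_nonneg_left hC (Nat.cast_nonneg n)) hgap hgap0 (by positivity)
      _ ≤ 2 * (n - j) * n.choose (n / 2) * d := by gcongr
      _ = (n - j) * (2 * d * n.choose (n / 2)) := by ring
  linarith [le_of_mul_le_mul_left key hpos]

lemma choose_half_le_choose_half_sub_add {s : ℕ} (hs : s ≤ n / 2) :
    (n : ℝ) * n.choose (n / 2) ≤ n * n.choose (n / 2 - s) + 4 * s ^ 2 * n.choose (n / 2) := by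
  induction s with
  | zero => simp
  | succ s ih =>
    have hstep := choose_succ_le_choose_add (n := n) (j := n / 2 - (s + 1)) (d := 2 * s + 2)
      (by omega) (by omega)
    rw [show n / 2 - (s + 1) + 1 = n / 2 - s by omega] at hstep
    have := ih (by omega)
    push_cast at hstep ⊢
    nlinarith [Nat.cast_nonneg (α := ℝ) (n.choose (n / 2)), Nat.cast_nonneg (α := ℝ) s]

lemma one_sub_mul_choose_half_le {L s : ℕ} (hn : 0 < n) (hL : L ≤ n / 2) (hs : s ≤ L) :
    (1 - 4 * (L : ℝ) ^ 2 / n) * n.choose (n / 2) ≤ n.choose (n / 2 - s) := by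
  have h := choose_half_le_choose_half_sub_add (n := n) (hs.trans hL)
  have hn' : (0 : ℝ) < n := by exact_mod_cast hn
  have hsL : (s : ℝ) ^ 2 ≤ L ^ 2 := by gcongr
  rw [sub_mul, one_mul, div_mul_eq_mul_div, sub_le_iff_le_add, ← sub_le_iff_le_add',
    le_div_iff₀ hn']
  nlinarith [Nat.cast_nonneg (α := ℝ) (n.choose (n / 2))]

end Binomial

section Nth

open Nat (nth count)

/-- Packing the points of `p` into consecutive positions starting here moves each of them
towards `h` (`packStart_add_between`). -/
def packStart (p : ℕ → Prop) [DecidablePred p] (h : ℕ) : ℕ := h + 1 - count p (h + 1)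

variable {p : ℕ → Prop}

lemma nth_add_sub_le (hf : (Set.ofPred p).Finite) {i j : ℕ} (hij : i ≤ j) (hj : j < #hf.toFinset) :
    nth p i + (j - i) ≤ nth p j := by
  induction j, hij using Nat.le_induction with
  | base => simp
  | succ j hij ih =>
    have := Nat.nth_strictMonoOn hf (show j ∈ Set.Iio _ from by simp; omega)
      (show j + 1 ∈ Set.Iio _ from hj) (lt_add_one j)
    have := ih (by omega)
    omega

variable [DecidablePred p]

lemma packStart_add_between (hf : (Set.ofPred p).Finite) (h : ℕ) {i : ℕ} (hi : i < #hf.toFinset) :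
    nth p i ≤ packStart p h + i ∧ packStart p h + i ≤ h ∨
      h < packStart p h + i ∧ packStart p h + i ≤ nth p i := by
  have hck : count p (h + 1) ≤ #hf.toFinset := Nat.count_le_card hf _
  have hch : count p (h + 1) ≤ h + 1 := Nat.count_le p
  unfold packStart
  by_cases hic : i < count p (h + 1)
  · have hlast : nth p (count p (h + 1) - 1) < h + 1 := Nat.nth_lt_of_lt_count (by omega)
    have := nth_add_sub_le hf (show i ≤ count p (h + 1) - 1 by omega) (by omega)
    omega
  · have hfirst : h + 1 ≤ nth p (count p (h + 1)) := by
      by_contra hlt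
      have := Nat.count_strict_mono (Nat.nth_mem_of_lt_card hf (by omega)) (not_le.1 hlt)
      rw [Nat.count_nth_of_lt_card_finite hf (by omega)] at this
      exact this.false
    have := nth_add_sub_le hf (not_lt.1 hic) hi
    omega

lemma packStart_add_card_le (hf : (Set.ofPred p).Finite) {n h : ℕ} (hp : ∀ j, p j → j ≤ n)
    (hh : h ≤ n) : packStart p h + #hf.toFinset ≤ n + 1 := by
  rcases Nat.eq_zero_or_pos #hf.toFinset with hk | hk
  · unfold packStart; omega
  · have := hp _ (Nat.nth_mem_of_lt_card hf (Nat.sub_one_lt_of_lt hk))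
    rcases packStart_add_between hf h (Nat.sub_one_lt_of_lt hk) with h' | h' <;> omega

lemma choose_nth_le_choose_packStart_add (hf : (Set.ofPred p).Finite) (n : ℕ) {i : ℕ}
    (hi : i < #hf.toFinset) : n.choose (nth p i) ≤ n.choose (packStart p (n / 2) + i) := by
  rcases packStart_add_between hf (n / 2) hi with ⟨h₁, h₂⟩ | ⟨h₁, h₂⟩
  · exact choose_le_choose_of_le_of_le_half h₁ h₂
  · exact choose_le_choose_of_half_lt_of_le h₁ h₂

end Nth

section Pack

open Nat (nth)

variable {m : ℕ} {G : Set (List (Fin m))} {β : Fin m → ℝ} {t : ℕ → Finset (Fin m)}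

variable (t) in
noncomputable def pack (k a : ℕ) : ℕ → Finset (Fin m) := fun j =>
  if j ∈ Ico a (a + k) then t (nth (fun i => t i ≠ ∅) (j - a)) else ∅

lemma mem_Ico_of_pack_ne_empty {k a j : ℕ} (h : pack t k a j ≠ ∅) : j ∈ Ico a (a + k) := by
  by_contra hj
  exact h (if_neg hj)

lemma validChainTemplate_pack (hG : [] ∉ G) (ht : ValidChainTemplate G t) (a : ℕ) :
    ValidChainTemplate G (pack t {j | t j ≠ ∅}.ncard a) := by
  obtain ⟨hf, hadm⟩ := (validChainTemplate_iff hG).1 ht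
  refine (validChainTemplate_iff hG).2 ⟨(Ico a _).finite_toSet.subset
    fun j hj => mem_Ico_of_pack_ne_empty hj,
    hadm.comap (fun j => nth (fun i => t i ≠ ∅) (j - a)) (fun j => ?_) fun j j' hj hj' hjj' => ?_⟩
  · unfold pack
    split_ifs <;> simp
  · have h := mem_Ico_of_pack_ne_empty (nonempty_iff_ne_empty.1 hj)
    have h' := mem_Ico_of_pack_ne_empty (nonempty_iff_ne_empty.1 hj')
    rw [mem_Ico, Set.ncard_eq_toFinset_card _ hf] at h h'
    exact Nat.nth_strictMonoOn hf (show j - a ∈ Set.Iio _ by simp; omega)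
      (show j' - a ∈ Set.Iio _ by simp; omega) (by omega)

lemma sum_eq_sum_nth (hf : {j | t j ≠ ∅}.Finite) {F : ℕ → ℝ} (hF : ∀ j, t j = ∅ → F j = 0)
    {s : Finset ℕ} (hs : ∀ j, t j ≠ ∅ → j ∈ s) :
    ∑ j ∈ s, F j = ∑ i ∈ range {j | t j ≠ ∅}.ncard, F (nth (fun j => t j ≠ ∅) i) := by
  rw [Set.ncard_eq_toFinset_card _ hf, ← sum_subset (fun j hj => hs j (hf.mem_toFinset.1 hj))
    fun j _ hj => hF j (not_not.1 fun h => hj (hf.mem_toFinset.2 h))]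
  symm
  refine sum_nbij (nth _) (fun i hi => hf.mem_toFinset.2 (Nat.nth_mem_of_lt_card hf
    (mem_range.1 hi))) ?_ (fun j hj => ?_) fun _ _ => rfl
  · rw [coe_range]
    exact (Nat.nth_strictMonoOn hf).injOn
  · obtain ⟨i, hi, rfl⟩ := Nat.exists_lt_card_finite_nth_eq hf (hf.mem_toFinset.1 hj)
    exact ⟨i, mem_range.2 hi, rfl⟩

variable (β) in
lemma layerWeight_pack {n k a : ℕ} (h : a + k ≤ n + 1) :
    layerWeight β n (pack t k a)
      = ∑ i ∈ range k, (n.choose (a + i) : ℝ) * logWeight β (t (nth (fun j => t j ≠ ∅) i)) := by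
  rw [layerWeight, ← sum_subset (s₁ := Ico a (a + k)) (fun j hj => by simp at hj ⊢; omega)
    fun j _ hj => by simp [pack, hj], sum_Ico_eq_sum_range]
  refine sum_congr (by simp) fun i hi => ?_
  simp [pack, mem_range.1 hi]

lemma layerWeight_le_layerWeight_pack (hβ : ∀ i, 0 ≤ β i) (hf : {j | t j ≠ ∅}.Finite) {n : ℕ}
    (hsupp : ∀ j, t j ≠ ∅ → j ≤ n) :
    layerWeight β n t ≤ layerWeight β n
      (pack t {j | t j ≠ ∅}.ncard (packStart (fun j => t j ≠ ∅) (n / 2))) := by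
  have hfit := packStart_add_card_le hf hsupp (Nat.div_le_self n 2)
  rw [← Set.ncard_eq_toFinset_card _ hf] at hfit
  rw [layerWeight_pack β hfit, layerWeight, sum_eq_sum_nth hf (fun j hj => by simp [hj])
    fun j hj => mem_range.2 (Nat.lt_succ_of_le (hsupp j hj))]
  refine sum_le_sum fun i hi => mul_le_mul_of_nonneg_right ?_ (logWeight_nonneg hβ _)
  rw [mem_range, Set.ncard_eq_toFinset_card _ hf] at hi
  exact_mod_cast choose_nth_le_choose_packStart_add hf n hi

lemma mul_omegaChain_le_layerWeight_pack (hβ : ∀ i, 0 ≤ β i) (hf : {j | t j ≠ ∅}.Finite)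
    {n L : ℕ} (hn : 0 < n) (hL : L ≤ n / 2) (hk : {j | t j ≠ ∅}.ncard ≤ L) :
    (1 - 4 * (L : ℝ) ^ 2 / n) * n.choose (n / 2) * omegaChain β t
      ≤ layerWeight β n (pack t {j | t j ≠ ∅}.ncard (n / 2 + 1 - {j | t j ≠ ∅}.ncard)) := by
  have hs : ∀ j, t j ≠ ∅ → j ∈ hf.toFinset := fun j hj => hf.mem_toFinset.2 hj
  rw [layerWeight_pack β (by omega), omegaChain_eq_sum hs,
    sum_eq_sum_nth hf (fun j hj => by simp [hj]) hs, mul_sum]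
  refine sum_le_sum fun i hi => mul_le_mul_of_nonneg_right ?_ (logWeight_nonneg hβ _)
  rw [mem_range] at hi
  rw [show n / 2 + 1 - {j | t j ≠ ∅}.ncard + i = n / 2 - ({j | t j ≠ ∅}.ncard - 1 - i) by omega]
  exact one_sub_mul_choose_half_le hn hL (by omega)

end Pack

section Critical

variable {m n : ℕ} {G : Set (List (Fin m))} {β : Fin m → ℝ}

lemma ValidTemplate.exists_chain_layerWeight_ge (hG : [] ∉ G)
    {T : Finset (Fin n) → Finset (Fin m)} (hT : ValidTemplate G T) (β : Fin m → ℝ) :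
    ∃ t, ValidChainTemplate G t ∧ (∀ j, t j ≠ ∅ → j ≤ n) ∧
      ∑ x, logWeight β (T x) ≤ layerWeight β n t := by
  obtain ⟨Y, hY, hsum⟩ := exists_chain_sum_le fun x => logWeight β (T x)
  have hsupp : ∀ j, (if j ≤ n then T (Y j) else ∅) ≠ ∅ → j ≤ n :=
    fun j hj => not_not.1 fun h => hj (if_neg h)
  refine ⟨fun j => if j ≤ n then T (Y j) else ∅, (validChainTemplate_iff hG).2
    ⟨(Set.finite_Iic n).subset hsupp, ((validTemplate_iff_isAdmissible hG).1 hT).comap Y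
      (fun j => by split_ifs <;> simp) fun j j' _ hj' hjj' =>
        hY j j' hjj' (hsupp j' (nonempty_iff_ne_empty.1 hj'))⟩, hsupp, hsum.trans_eq ?_⟩
  exact sum_congr rfl fun j hj => by simp only [if_pos (Nat.lt_succ_iff.1 (mem_range.1 hj))]

variable {L : ℕ} (hβ : ∀ i, 0 ≤ β i)
  (hL : ∀ t : ℕ → Finset (Fin m), ValidChainTemplate G t → {j | t j ≠ ∅}.ncard < L)
include hβ hL

lemma bddAbove_omegaChain : BddAbove {w | ∃ t, ValidChainTemplate G t ∧ w = omegaChain β t} := by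
  refine ⟨L * logWeight β univ, ?_⟩
  rintro _ ⟨t, ht, rfl⟩
  exact (omegaChain_le_ncard_mul hβ ht.1).trans
    (mul_le_mul_of_nonneg_right (by exact_mod_cast (hL t ht).le) (logWeight_nonneg hβ _))

lemma omegaChain_le_omegaCrit {t : ℕ → Finset (Fin m)} (ht : ValidChainTemplate G t) :
    omegaChain β t ≤ omegaCrit β G :=
  le_csSup (bddAbove_omegaChain hβ hL) ⟨t, ht, rfl⟩

lemma omegaCrit_mul_le (hG : [] ∉ G) (hn : 0 < n) {W : ℝ} (hW : 0 ≤ W)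
    (hpack : ∀ t, ValidChainTemplate G t →
      layerWeight β n (pack t {j | t j ≠ ∅}.ncard (n / 2 + 1 - {j | t j ≠ ∅}.ncard)) ≤ W) :
    omegaCrit β G * (1 - 4 * L ^ 2 / n) * n.choose (n / 2) ≤ W := by
  have hcrit := omegaChain_le_omegaCrit hβ hL (validChainTemplate_empty hG)
  rw [omegaChain_const_empty] at hcrit
  rcases le_or_gt (1 - 4 * (L : ℝ) ^ 2 / n) 0 with hc | hc
  · exact (mul_nonpos_of_nonpos_of_nonneg (mul_nonpos_of_nonneg_of_nonpos hcrit hc)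
      (Nat.cast_nonneg _)).trans hW
  have hLn : L ≤ n / 2 := by
    have : (4 * L ^ 2 : ℝ) < n := by
      rwa [sub_pos, div_lt_one (by exact_mod_cast hn)] at hc
    have : 4 * L ^ 2 < n := by exact_mod_cast this
    have := Nat.le_self_pow two_ne_zero L
    omega
  have hC : (0 : ℝ) < (1 - 4 * L ^ 2 / n) * n.choose (n / 2) :=
    mul_pos hc (by exact_mod_cast Nat.choose_pos (Nat.div_le_self n 2))
  rw [mul_assoc, ← le_div_iff₀ hC]
  refine csSup_le ⟨0, _, validChainTemplate_empty hG, (omegaChain_const_empty β).symm⟩ ?_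
  rintro _ ⟨t, ht, rfl⟩
  rw [le_div_iff₀' hC]
  exact (mul_omegaChain_le_layerWeight_pack hβ ht.1 hn hLn (hL t ht).le).trans (hpack t ht)

lemma exists_optimal_chainTemplate (hG : [] ∉ G) (n : ℕ) :
    ∃ t, ValidChainTemplate G t ∧ (∃ a, ∀ j, t j ≠ ∅ → a ≤ j ∧ j < a + L) ∧
      ∀ T : Finset (Fin n) → Finset (Fin m), ValidTemplate G T →
        ∑ x, logWeight β (T x) ≤ layerWeight β n t := by
  classical
  obtain ⟨T₀, hT₀, hmax⟩ := exists_max_image {T | ValidTemplate G T}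
    (fun T : Finset (Fin n) → Finset (Fin m) => ∑ x, logWeight β (T x))
    ⟨_, mem_filter.2 ⟨mem_univ _, (validChainTemplate_empty hG).validTemplate_comp_card hG⟩⟩
  obtain ⟨t, ht, htn, hT₀t⟩ := (mem_filter.1 hT₀).2.exists_chain_layerWeight_ge hG β
  refine ⟨_, validChainTemplate_pack hG ht _, ⟨packStart (fun j => t j ≠ ∅) (n / 2),
    fun j hj => ?_⟩, fun T hT => (hmax T (mem_filter.2 ⟨mem_univ _, hT⟩)).trans
      (hT₀t.trans (layerWeight_le_layerWeight_pack hβ ht.1 htn))⟩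
  have := mem_Ico.1 (mem_Ico_of_pack_ne_empty hj)
  have := hL t ht
  omega

end Critical

theorem stmt11_general (m : ℕ) (β : Fin m → ℝ) (hβ : ∀ i, 0 < β i)
    (G : Set (List (Fin m))) (hG2 : ∀ l ∈ G, 2 ≤ l.length)
    (L : ℕ)
    (hL : ∀ t : ℕ → Finset (Fin m), ValidChainTemplate G t → {j | t j ≠ ∅}.ncard < L) :
    ∃ Cconst : ℝ, ∀ n : ℕ, 1 ≤ n →
      ∃ T : Finset (Fin n) → Finset (Fin m),
        ValidTemplate G T ∧
        (∀ x y : Finset (Fin n), x.card = y.card → T x = T y) ∧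
        (∃ a : ℕ, ∀ x : Finset (Fin n), T x ≠ ∅ → a ≤ x.card ∧ x.card < a + L) ∧
        (∀ T' : Finset (Fin n) → Finset (Fin m), ValidTemplate G T' →
          (∑ x : Finset (Fin n), Real.log (1 + ∑ i ∈ T' x, β i)) ≤
            ∑ x : Finset (Fin n), Real.log (1 + ∑ i ∈ T x, β i)) ∧
        (∑ x : Finset (Fin n), Real.log (1 + ∑ i ∈ T x, β i)) ≤
          omegaCrit β G * (n.choose (n / 2)) ∧
        omegaCrit β G * (1 - Cconst / n) * (n.choose (n / 2)) ≤
          ∑ x : Finset (Fin n), Real.log (1 + ∑ i ∈ T x, β i) := by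
  have hG : [] ∉ G := fun h => by simpa using hG2 [] h
  have hβ₀ : ∀ i, 0 ≤ β i := fun i => (hβ i).le
  refine ⟨4 * L ^ 2, fun n hn => ?_⟩
  obtain ⟨t, ht, ⟨a, ha⟩, hopt⟩ := exists_optimal_chainTemplate hβ₀ hL hG n
  refine ⟨fun x => t #x, ?_⟩
  simp only [← logWeight_def, sum_logWeight_card]
  refine ⟨ht.validTemplate_comp_card hG, fun x y h => by rw [h], ⟨a, fun x hx => ha _ hx⟩, hopt,
    (layerWeight_le_choose_mul_omegaChain hβ₀ ht.1 n).trans ?_,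
    omegaCrit_mul_le hβ₀ hL hG hn (sum_nonneg fun j _ => ?_) fun u hu => ?_⟩
  · rw [mul_comm]
    exact mul_le_mul_of_nonneg_right (omegaChain_le_omegaCrit hβ₀ hL ht) (Nat.cast_nonneg _)
  · exact mul_nonneg (Nat.cast_nonneg _) (logWeight_nonneg hβ₀ _)
  · rw [← sum_logWeight_card]
    exact hopt _ ((validChainTemplate_pack hG hu _).validTemplate_comp_card hG)

theorem stmt11 (m : ℕ) (β : Fin m → ℝ) (hβ : ∀ i, 0 < β i)
    (G : Set (List (Fin m))) (hsp : Sparse m G) (hG2 : ∀ l ∈ G, 2 ≤ l.length)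
    (L : ℕ)
    (hL : ∀ t : ℕ → Finset (Fin m), ValidChainTemplate G t → {j | t j ≠ ∅}.ncard < L) :
    ∃ Cconst : ℝ, ∀ n : ℕ, 1 ≤ n →
      ∃ T : Finset (Fin n) → Finset (Fin m),
        ValidTemplate G T ∧
        (∀ x y : Finset (Fin n), x.card = y.card → T x = T y) ∧
        (∃ a : ℕ, ∀ x : Finset (Fin n), T x ≠ ∅ → a ≤ x.card ∧ x.card < a + L) ∧
        (∀ T' : Finset (Fin n) → Finset (Fin m), ValidTemplate G T' →
          (∑ x : Finset (Fin n), Real.log (1 + ∑ i ∈ T' x, β i)) ≤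
            ∑ x : Finset (Fin n), Real.log (1 + ∑ i ∈ T x, β i)) ∧
        (∑ x : Finset (Fin n), Real.log (1 + ∑ i ∈ T x, β i)) ≤
          omegaCrit β G * (n.choose (n / 2)) ∧
        omegaCrit β G * (1 - Cconst / n) * (n.choose (n / 2)) ≤
          ∑ x : Finset (Fin n), Real.log (1 + ∑ i ∈ T x, β i) :=
  stmt11_general m β hβ G hG2 L hL
end

section
/- Let $\mathcal{G}$ forbid a monochromatic chain of every color and let $L = L(\mathcal{G})$ be such that no validly colored set contains a chain of $L$ elements. Then for all $n$, $|\Lambda(\mathcal{G},n)| \leq \sum_{S} (m+1)^{|S|}$ where the sum is over all subsets $S \subseteq \mathcal{P}([n])$ containing no chain of $L$ elements; in particular, by Mirsky's theorem every such $S$ is a union of at most $L-1$ antichains, so $|S| \leq (L-1)\binom{n}{\lfloor n/2\rfloor}$ and $|\Lambda(\mathcal{G},n)| \leq 2^{2^n}\,(m+1)^{(L-1)\binom{n}{\lfloor n/2\rfloor}}$. -/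
/-
The underlying set of a validly colored subset contains no chain of `L` elements, and a colored
subset is determined by its underlying set `S` together with a map `S → Option (Fin m)`, which
gives the first bound. For the second, the height function of such an `S` takes fewer than
`L - 1` values and is strictly monotone, so its fibres are antichains (Mirsky); by Sperner each
fibre has at most `n.choose (n / 2)` elements, and there are at most `2 ^ 2 ^ n` sets `S`.
-/

open Finset
open scoped Classical

variable {α : Type*}

def HasChain [LT α] (S : Set α) (L : ℕ) : Prop :=
  ∃ l : List α, l.IsChain (· < ·) ∧ l.length = L ∧ ∀ x ∈ l, x ∈ S

theorem exists_strictMonoOn_lt_of_not_hasChain [Preorder α] {S : Set α} {L : ℕ}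
    (hS : ¬ HasChain S L) : ∃ h : α → ℕ, StrictMonoOn h S ∧ ∀ x ∈ S, h x + 1 < L := by
  have hL_pos : 1 ≤ L := by
    by_contra h
    exact hS ⟨[], .nil, by simp; omega, by simp⟩
  have hheight : ∀ x : S, Order.height x < (L - 1 : ℕ) := by
    intro x
    by_contra! h
    obtain ⟨p, -, hp⟩ := Order.exists_series_of_le_height x h
    refine hS ⟨p.toList.map Subtype.val, ?_, by simp [RelSeries.length_toList, hp]; omega,
      by simp +contextual⟩
    exact List.isChain_map_of_isChain Subtype.val (fun _ _ h => h) p.isChain_toList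
  have hcoe : ∀ x : S, ((Order.height x).toNat : ℕ∞) = Order.height x := fun x =>
    ENat.natCast_toNat ((hheight x).trans (ENat.natCast_lt_top _)).ne
  refine ⟨fun a => if ha : a ∈ S then (Order.height (⟨a, ha⟩ : S)).toNat else 0, ?_, ?_⟩
  · intro a ha b hb hab
    simp only [ha, hb, dif_pos]
    rw [← ENat.natCast_lt_natCast, hcoe, hcoe]
    exact Order.height_strictMono (α := S) hab (by rw [← hcoe]; exact ENat.natCast_lt_top _)
  · intro a ha
    have h := hheight ⟨a, ha⟩
    rw [← hcoe, ENat.natCast_lt_natCast] at h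
    simp only [ha, dif_pos]
    omega

theorem card_le_mul_of_strictMonoOn [PartialOrder α] {S : Finset α} {h : α → ℕ} {k w : ℕ}
    (hmono : StrictMonoOn h S) (hlt : ∀ x ∈ S, h x < k)
    (hw : ∀ A ⊆ S, IsAntichain (· ≤ ·) (A : Set α) → #A ≤ w) : #S ≤ w * k := by
  rw [← card_range k]
  refine card_le_mul_card_image_of_maps_to (fun x hx => mem_range.2 (hlt x hx)) w
    fun i _ => hw _ (filter_subset _ _) ?_
  intro a ha b hb hne hab
  simp only [coe_filter, Set.mem_ofPred_eq] at ha hb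
  exact (hmono ha.1 hb.1 (lt_of_le_of_ne hab hne)).ne (ha.2.trans hb.2.symm)

theorem card_le_of_not_hasChain {ι : Type*} [Fintype ι] {S : Finset (Finset ι)} {L : ℕ}
    (hS : ¬ HasChain (S : Set (Finset ι)) L) :
    #S ≤ (L - 1) * (Fintype.card ι).choose (Fintype.card ι / 2) := by
  obtain ⟨h, hmono, hlt⟩ := exists_strictMonoOn_lt_of_not_hasChain hS
  rw [mul_comm]
  exact card_le_mul_of_strictMonoOn hmono (fun x hx => by have := hlt x hx; omega)
    fun A _ hA => hA.sperner

section Coloring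

variable {β : Type*} [Fintype α]

/-- A colored subset `(S, c)` of `α` is encoded as `f : α → Option β` with `f = none` off `S`. -/
noncomputable def underlyingSet (f : α → Option β) : Finset α := {x | f x ≠ none}

@[simp]
theorem mem_underlyingSet {f : α → Option β} {x : α} : x ∈ underlyingSet f ↔ f x ≠ none := by
  simp [underlyingSet]

theorem card_filter_underlyingSet_eq_le [DecidableEq α] [Fintype β] (s : Finset (α → Option β))
    (S : Finset α) : #{f ∈ s | underlyingSet f = S} ≤ (Fintype.card β + 1) ^ #S := by
  calc #{f ∈ s | underlyingSet f = S}
      ≤ Fintype.card (S → Option β) := by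
        rw [← card_univ]
        refine card_le_card_of_injOn (fun f (x : S) => f x) (fun _ _ => mem_coe.2 (mem_univ _)) ?_
        intro f hf g hg hfg
        simp only [coe_filter, Set.mem_ofPred_eq] at hf hg
        funext x
        by_cases hx : x ∈ S
        · exact congrFun hfg ⟨x, hx⟩
        · have hfx : f x = none := by simpa [← hf.2] using hx
          have hgx : g x = none := by simpa [← hg.2] using hx
          rw [hfx, hgx]
    _ = (Fintype.card β + 1) ^ #S := by simp

theorem card_filter_le_sum_pow_card [DecidableEq α] [Fintype β] {P : (α → Option β) → Prop}
    {Q : Finset α → Prop} [DecidablePred P] [DecidablePred Q]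
    (hPQ : ∀ f, P f → Q (underlyingSet f)) :
    #(univ.filter P) ≤ ∑ S ∈ univ.filter Q, (Fintype.card β + 1) ^ #S := by
  rw [card_eq_sum_card_fiberwise (f := underlyingSet)
    (fun f hf => mem_filter.2 ⟨mem_univ _, hPQ f (mem_filter.1 hf).2⟩)]
  exact sum_le_sum fun S _ => card_filter_underlyingSet_eq_le _ S

end Coloring

theorem stmt18_general (n m L : ℕ) (G : Set (List (Fin m)))
    (hL : ∀ f : Finset (Fin n) → Option (Fin m),
      (¬ ∃ l : List (Finset (Fin n) × Fin m), (l.map Prod.fst).Chain' (· ⊂ ·) ∧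
          (∀ q ∈ l, f q.1 = some q.2) ∧ l.map Prod.snd ∈ G) →
      ¬ ∃ l : List (Finset (Fin n)), l.Chain' (· ⊂ ·) ∧ l.length = L ∧
          ∀ x ∈ l, f x ≠ none) :
    (Finset.univ.filter (fun f : Finset (Fin n) → Option (Fin m) =>
        ¬ ∃ l : List (Finset (Fin n) × Fin m), (l.map Prod.fst).Chain' (· ⊂ ·) ∧
          (∀ q ∈ l, f q.1 = some q.2) ∧ l.map Prod.snd ∈ G)).card ≤
      (∑ S ∈ Finset.univ.filter (fun S : Finset (Finset (Fin n)) =>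
          ¬ ∃ l : List (Finset (Fin n)), l.Chain' (· ⊂ ·) ∧ l.length = L ∧
            ∀ x ∈ l, x ∈ S),
        (m + 1) ^ S.card) ∧
    (∑ S ∈ Finset.univ.filter (fun S : Finset (Finset (Fin n)) =>
        ¬ ∃ l : List (Finset (Fin n)), l.Chain' (· ⊂ ·) ∧ l.length = L ∧
          ∀ x ∈ l, x ∈ S),
      (m + 1) ^ S.card) ≤ 2 ^ (2 ^ n) * (m + 1) ^ ((L - 1) * n.choose (n / 2)) := by
  constructor
  · rw [show m + 1 = Fintype.card (Fin m) + 1 by simp]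
    apply card_filter_le_sum_pow_card
    rintro f hf ⟨l, hl, hlen, hmem⟩
    exact hL f hf ⟨l, hl, hlen, fun x hx => by simpa using hmem x hx⟩
  · calc _ ≤ ∑ _S ∈ _, (m + 1) ^ ((L - 1) * n.choose (n / 2)) := by
          refine sum_le_sum fun S hS => Nat.pow_le_pow_right m.succ_pos ?_
          simpa using card_le_of_not_hasChain (mem_filter.1 hS).2
      _ ≤ 2 ^ (2 ^ n) * (m + 1) ^ ((L - 1) * n.choose (n / 2)) := by
          rw [sum_const, smul_eq_mul]
          gcongr
          exact (card_filter_le _ _).trans (by simp)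

theorem stmt18 (n m L : ℕ) (G : Set (List (Fin m))) (hsp : Sparse m G)
    (hL : ∀ f : Finset (Fin n) → Option (Fin m),
      (¬ ∃ l : List (Finset (Fin n) × Fin m), (l.map Prod.fst).Chain' (· ⊂ ·) ∧
          (∀ q ∈ l, f q.1 = some q.2) ∧ l.map Prod.snd ∈ G) →
      ¬ ∃ l : List (Finset (Fin n)), l.Chain' (· ⊂ ·) ∧ l.length = L ∧
          ∀ x ∈ l, f x ≠ none) :
    (Finset.univ.filter (fun f : Finset (Fin n) → Option (Fin m) =>
        ¬ ∃ l : List (Finset (Fin n) × Fin m), (l.map Prod.fst).Chain' (· ⊂ ·) ∧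
          (∀ q ∈ l, f q.1 = some q.2) ∧ l.map Prod.snd ∈ G)).card ≤
      (∑ S ∈ Finset.univ.filter (fun S : Finset (Finset (Fin n)) =>
          ¬ ∃ l : List (Finset (Fin n)), l.Chain' (· ⊂ ·) ∧ l.length = L ∧
            ∀ x ∈ l, x ∈ S),
        (m + 1) ^ S.card) ∧
    (∑ S ∈ Finset.univ.filter (fun S : Finset (Finset (Fin n)) =>
        ¬ ∃ l : List (Finset (Fin n)), l.Chain' (· ⊂ ·) ∧ l.length = L ∧
          ∀ x ∈ l, x ∈ S),
      (m + 1) ^ S.card) ≤ 2 ^ (2 ^ n) * (m + 1) ^ ((L - 1) * n.choose (n / 2)) :=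
  stmt18_general n m L G hL
end
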